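/- Let X be a finite connected graph of genus g and let G be a finite group acting on X, possibly with invertible edges. Let g(X'/G) = 1 − (#(G-orbits on V(X)) + #(G-orbits on E(X))) + #(G-orbits on D(X)) be the genus of the quotient of the barycentric subdivision X' of X by G (whose black vertices are the V-orbits, white vertices are the E-orbits, and edges are the dart orbits). Then g − 1 = |G|·(g(X'/G) − 1) + Σ_{v ∈ V(X)} (|G^v| − 1) − Σ_{e ∈ E(X)} (|G^e| − 1) + Σ_{e ∈ E(X)} (|G^{e}| − |G^e|). -/

import Mathlib

/-!
Summing the orbit–stabilizer theorem over one orbit gives `|G|`, so for every finite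
`G`-invariant set the stabilizer orders add up to `|G|` times the number of orbits. Apply this to
the vertices, the darts and the edges (with their setwise stabilizers). Because `bar` commutes
with `G`, the pointwise stabilizer of the edge `{x, bar x}` is the stabilizer of the dart `x`,
and every edge carries exactly two darts; hence the dart sum is twice the sum of the pointwise
edge stabilizers. The formula is then a linear combination of these identities.
-/

open MulAction

section OrbitCounting

variable {G α : Type*} [Group G] [MulAction G α]

variable (G α) in
def MulAction.sigmaStabilizerEquivSigmaFixedBy :
    (Σ a : α, stabilizer G a) ≃ Σ g : G, fixedBy α g where
  toFun p := ⟨p.2, p.1, p.2.2⟩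
  invFun p := ⟨p.2, p.1, p.2.2⟩
  left_inv _ := rfl
  right_inv _ := rfl

-- Double counting the pairs `(a, g)` with `g • a = a` reduces this to Burnside's lemma.
theorem MulAction.sum_card_stabilizer_eq_card_orbits_mul_card_group [Fintype α] [Finite G] :
    ∑ a : α, Nat.card (stabilizer G a) = Nat.card (orbitRel.Quotient G α) * Nat.card G := by
  rw [← Nat.card_sigma, ← Nat.card_prod]
  exact Nat.card_congr
    ((sigmaStabilizerEquivSigmaFixedBy G α).trans (sigmaFixedByEquivOrbitsProdGroup G α))

theorem MulAction.sum_card_stabilizer_eq_card_orbits_mul_card_group_of_smul_mem [Finite G]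
    (s : Finset α) (hs : ∀ g : G, ∀ a ∈ s, g • a ∈ s) :
    ∑ a ∈ s, Nat.card (stabilizer G a)
      = Nat.card {t : Set α | ∃ a ∈ s, t = orbit G a} * Nat.card G := by
  let p : SubMulAction G α := ⟨s, fun {g a} => hs g a⟩
  let : Fintype p := Fintype.ofFinset s fun _ => Iff.rfl
  have orbit_injective : Function.Injective fun ω : orbitRel.Quotient G p =>
      Subtype.val '' ω.orbit :=
    (Set.image_injective.mpr Subtype.val_injective).comp orbitRel.Quotient.orbit_injective
  have orbit_range : Set.range (fun ω : orbitRel.Quotient G p => Subtype.val '' ω.orbit)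
      = {t : Set α | ∃ a ∈ s, t = orbit G a} := by
    ext t
    constructor
    · rintro ⟨ω, rfl⟩
      induction ω using Quotient.inductionOn' with | h a => ?_
      exact ⟨a, a.2, SubMulAction.val_image_orbit a⟩
    · rintro ⟨a, ha, rfl⟩
      exact ⟨⟦⟨a, ha⟩⟧, SubMulAction.val_image_orbit (p := p) ⟨a, ha⟩⟩
  calc ∑ a ∈ s, Nat.card (stabilizer G a)
      = ∑ a : p, Nat.card (stabilizer G a) := by
        simp only [SubMulAction.stabilizer_of_subMul]
        exact Finset.sum_subtype (F := inferInstance) s (fun _ => Iff.rfl) _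
    _ = Nat.card {t : Set α | ∃ a ∈ s, t = orbit G a} * Nat.card G := by
        rw [sum_card_stabilizer_eq_card_orbits_mul_card_group, ← orbit_range,
          Nat.card_range_of_injective orbit_injective]

theorem MulAction.sum_card_stabilizer_eq_card_setOf_orbit_mul_card_group [Fintype α] [Finite G] :
    ∑ a : α, Nat.card (stabilizer G a)
      = Nat.card {t : Set α | ∃ a, t = orbit G a} * Nat.card G := by
  simpa using sum_card_stabilizer_eq_card_orbits_mul_card_group_of_smul_mem (G := G)
    (Finset.univ : Finset α) (by simp)

end OrbitCounting

namespace Sym2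

variable {G α : Type*} [Group G] [MulAction G α]

instance : MulAction G (Sym2 α) where
  smul g := Sym2.map (g • ·)
  one_smul e := by
    change e.map (fun x => (1 : G) • x) = e
    simp
  mul_smul g h e := by
    change e.map (fun x => (g * h) • x) = (e.map (h • ·)).map (g • ·)
    simp [Sym2.map_map, mul_smul]

@[simp]
theorem smul_mk (g : G) (x y : α) : g • s(x, y) = s(g • x, g • y) := rfl

end Sym2

section Darts

variable {G D : Type*} [Group G] [MulAction G D] {bar : D → D}

theorem card_setOf_forall_mem_sym2_mk_smul_eq
    (hbar : ∀ (g : G) (x : D), bar (g • x) = g • bar x) (x : D) :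
    Nat.card {g : G | ∀ y ∈ s(x, bar x), g • y = y} = Nat.card (stabilizer G x) := by
  refine Nat.card_congr (Equiv.subtypeEquivRight fun g => ?_)
  simp only [Set.mem_ofPred_eq, Sym2.mem_iff, forall_eq_or_imp, forall_eq, mem_stabilizer_iff,
    ← hbar]
  exact ⟨And.left, fun h => ⟨h, congrArg bar h⟩⟩

variable [Fintype D] [DecidableEq D]

theorem smul_mem_image_sym2_mk (hbar : ∀ (g : G) (x : D), bar (g • x) = g • bar x) (g : G)
    {e : Sym2 D} (he : e ∈ Finset.univ.image fun x => s(x, bar x)) :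
    g • e ∈ Finset.univ.image fun x => s(x, bar x) := by
  obtain ⟨x, -, rfl⟩ := Finset.mem_image.mp he
  exact Finset.mem_image.mpr ⟨g • x, Finset.mem_univ _, by rw [Sym2.smul_mk, hbar]⟩

theorem filter_sym2_mk_eq_pair (hinv : Function.Involutive bar) (x : D) :
    ({y | s(y, bar y) = s(x, bar x)} : Finset D) = {x, bar x} := by
  ext y
  simp only [Finset.mem_filter, Finset.mem_univ, true_and, Finset.mem_insert,
    Finset.mem_singleton, Sym2.eq_iff]
  constructor
  · rintro (⟨h, -⟩ | ⟨h, -⟩) <;> simp [h]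
  · rintro (rfl | rfl)
    · exact Or.inl ⟨rfl, rfl⟩
    · exact Or.inr ⟨rfl, hinv x⟩

theorem sum_sym2_mk_eq_two_nsmul_sum_image {M : Type*} [AddCommMonoid M]
    (hinv : Function.Involutive bar) (hfree : ∀ x, bar x ≠ x) (f : Sym2 D → M) :
    ∑ x, f s(x, bar x) = 2 • ∑ e ∈ Finset.univ.image (fun x => s(x, bar x)), f e := by
  rw [Finset.sum_comp, Finset.smul_sum]
  refine Finset.sum_congr rfl fun e he => ?_
  obtain ⟨x, -, rfl⟩ := Finset.mem_image.mp he
  rw [filter_sym2_mk_eq_pair hinv, Finset.card_pair (hfree x).symm]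

end Darts

theorem riemann_hurwitz_barycentric_general
    {V D G : Type} [Fintype V] [Fintype D]
    [Group G] [Fintype G] [MulAction G D] [MulAction G V]
    (bar : D → D)
    (hbar_invol : ∀ x : D, bar (bar x) = x)
    (hbar_nofix : ∀ x : D, bar x ≠ x)
    (hbar_equiv : ∀ (g : G) (x : D), bar (g • x) = g • bar x)
    (E : Set (Sym2 D)) (hE : E = {e : Sym2 D | ∃ x : D, e = Sym2.mk x (bar x)})
    (g gQ : ℤ)
    (hg : g = 1 - (Nat.card V : ℤ) + (Nat.card E : ℤ))
    (hgQ : gQ = 1 - ((Nat.card {s : Set V | ∃ v : V, s = MulAction.orbit G v} : ℤ) + (Nat.card {s : Set (Sym2 D) | ∃ e ∈ E, s = {e' : Sym2 D | ∃ g : G, Sym2.map (fun y => g • y) e = e'}} : ℤ)) + (Nat.card {s : Set D | ∃ x : D, s = MulAction.orbit G x} : ℤ)) :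
    g - 1 = (Nat.card G : ℤ) * (gQ - 1)
      + (∑ᶠ v : V, ((Nat.card (MulAction.stabilizer G v) : ℤ) - 1))
      - (∑ᶠ e ∈ E, ((Nat.card {g : G | ∀ y ∈ e, g • y = y} : ℤ) - 1))
      + (∑ᶠ e ∈ E, ((Nat.card {g : G | Sym2.map (fun y => g • y) e = e} : ℤ)
          - (Nat.card {g : G | ∀ y ∈ e, g • y = y} : ℤ))) := by
  classical
  set F := Finset.univ.image fun x => s(x, bar x)
  have hEF : E = F := by
    rw [hE]
    ext e
    simp [F, eq_comm]
  have orbits_V := sum_card_stabilizer_eq_card_setOf_orbit_mul_card_group (G := G) (α := V)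
  have orbits_D := sum_card_stabilizer_eq_card_setOf_orbit_mul_card_group (G := G) (α := D)
  have orbits_E := sum_card_stabilizer_eq_card_orbits_mul_card_group_of_smul_mem F
    fun g _ => smul_mem_image_sym2_mk hbar_equiv g
  have darts : ∑ x : D, Nat.card (stabilizer G x)
      = 2 * ∑ e ∈ F, Nat.card {g : G | ∀ y ∈ e, g • y = y} := by
    rw [← smul_eq_mul, ← sum_sym2_mk_eq_two_nsmul_sum_image hbar_invol hbar_nofix]
    simp only [card_setOf_forall_mem_sym2_mk_smul_eq hbar_equiv]
  have edge_orbit (e : Sym2 D) : {e' | ∃ g : G, e.map (g • ·) = e'} = orbit G e := rfl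
  have setwise_stabilizer (e : Sym2 D) :
      Nat.card {g : G | e.map (g • ·) = e} = Nat.card (stabilizer G e) := rfl
  subst hg hgQ hEF
  rw [finsum_eq_sum_of_fintype, finsum_mem_coe_finset, finsum_mem_coe_finset]
  simp only [edge_orbit, setwise_stabilizer, Finset.mem_coe, Finset.sum_sub_distrib,
    Finset.sum_const, Finset.card_univ, nsmul_eq_mul, mul_one, Finset.coe_sort_coe,
    Nat.card_eq_finsetCard, Nat.card_eq_fintype_card (α := V)]
  zify at orbits_V orbits_D orbits_E darts
  linarith

/-- A finite graph `X = (D, V; I, bar)`: `D` the darts, `V` the vertices,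
`I` the incidence function, `bar` the fixed-point-free dart-reversing involution.
A finite group `G` acts on `X` via automorphisms (equivariantly and faithfully).
The edge set `E` consists of the unordered pairs `{x, bar x}`. -/
theorem riemann_hurwitz_barycentric
    {V D G : Type} [Fintype V] [Fintype D] [Nonempty V]
    [Group G] [Fintype G] [MulAction G D] [MulAction G V]
    (I : D → V) (bar : D → D)
    (hbar_invol : ∀ x : D, bar (bar x) = x)
    (hbar_nofix : ∀ x : D, bar x ≠ x)
    (hI_equiv : ∀ (g : G) (x : D), I (g • x) = g • I x)
    (hbar_equiv : ∀ (g : G) (x : D), bar (g • x) = g • bar x)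
    (hfaithful : ∀ g : G, (∀ x : D, g • x = x) → (∀ v : V, g • v = v) → g = 1)
    (E : Set (Sym2 D)) (hE : E = {e : Sym2 D | ∃ x : D, e = Sym2.mk x (bar x)})
    (hconn : ∀ u v : V, Relation.ReflTransGen
      (fun a b : V => ∃ x : D, I x = a ∧ I (bar x) = b) u v)
    (g gQ : ℤ)
    (hg : g = 1 - (Nat.card V : ℤ) + (Nat.card E : ℤ))
    (hgQ : gQ = 1 - ((Nat.card {s : Set V | ∃ v : V, s = MulAction.orbit G v} : ℤ) + (Nat.card {s : Set (Sym2 D) | ∃ e ∈ E, s = {e' : Sym2 D | ∃ g : G, Sym2.map (fun y => g • y) e = e'}} : ℤ)) + (Nat.card {s : Set D | ∃ x : D, s = MulAction.orbit G x} : ℤ)) :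
    g - 1 = (Nat.card G : ℤ) * (gQ - 1)
      + (∑ᶠ v : V, ((Nat.card (MulAction.stabilizer G v) : ℤ) - 1))
      - (∑ᶠ e ∈ E, ((Nat.card {g : G | ∀ y ∈ e, g • y = y} : ℤ) - 1))
      + (∑ᶠ e ∈ E, ((Nat.card {g : G | Sym2.map (fun y => g • y) e = e} : ℤ)
          - (Nat.card {g : G | ∀ y ∈ e, g • y = y} : ℤ))) :=
  riemann_hurwitz_barycentric_general bar hbar_invol hbar_nofix hbar_equiv E hE g gQ hg hgQ
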